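/- arXiv:2404.08902 — 2 statements merged into one kernel-verified Lean document; each statement's English description precedes it below -/
import Mathlib

section
/- (Discrete Gronwall lemma) Let a_k, b_k, c_k, d_k, γ_k, Δt_k be nonnegative reals satisfying a_{k+1} − a_k + b_{k+1}Δt_{k+1} + c_{k+1}Δt_{k+1} − c_kΔt_k ≤ a_k d_k Δt_k + γ_{k+1}Δt_{k+1} for all 0 ≤ k ≤ m. Then a_{m+1} + Σ_{k=0}^{m+1} b_kΔt_k ≤ exp(Σ_{k=0}^m d_kΔt_k) · ( a_0 + (b_0+c_0)Δt_0 + Σ_{k=1}^{m+1} γ_kΔt_k ). -/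
/-!
For the energy `E n = a n + ∑_{k ≤ n} b k Δt k + c n Δt n` the hypothesis gives
`E (k+1) ≤ (1 + d k Δt k) E k + γ (k+1) Δt (k+1)`, because `(1 + d k Δt k) E k` exceeds
`E k + a k d k Δt k` by the nonnegative `d k Δt k (∑_{j ≤ k} b j Δt j + c k Δt k)`.
The classical discrete Grönwall inequality then bounds `E (m+1)`, which dominates
`a (m+1) + ∑ b k Δt k`.
-/

namespace Paper

open Finset Real

theorem discrete_gronwall_range {u b c : ℕ → ℝ} {N : ℕ} (hu₀ : 0 ≤ u 0) (huN : 0 ≤ u N)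
    (hu : ∀ n < N, u (n + 1) ≤ (1 + c n) * u n + b n) (hc : ∀ n, 0 ≤ c n)
    (hb : ∀ n, 0 ≤ b n) :
    u N ≤ (u 0 + ∑ k ∈ range N, b k) * exp (∑ i ∈ range N, c i) := by
  -- Freezing `u` after time `N` makes the recurrence hold for every `n`.
  set v : ℕ → ℝ := fun n => u (min n N) with hv
  have hv_rec : ∀ n ≥ 0, v (n + 1) ≤ (1 + c n) * v n + b n := by
    intro n _
    rcases lt_or_ge n N with hn | hn
    · simpa only [hv, min_eq_left hn.le, min_eq_left (Nat.succ_le_of_lt hn)] using hu n hn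
    · simp only [hv, min_eq_right hn, min_eq_right (Nat.le_succ_of_le hn)]
      nlinarith [hc n, hb n]
  simpa only [hv, Nat.zero_min, min_self, range_eq_Ico] using
    _root_.discrete_gronwall (u := v) (by simpa [hv] using hu₀) hv_rec (fun n _ => hc n)
      (fun n _ => hb n) (Nat.zero_le N)

def energy (a b c Δt : ℕ → ℝ) (n : ℕ) : ℝ :=
  a n + ∑ k ∈ range (n + 1), b k * Δt k + c n * Δt n

section Energy

variable {a b c Δt : ℕ → ℝ}

theorem energy_nonneg (ha : ∀ k, 0 ≤ a k) (hb : ∀ k, 0 ≤ b k) (hc : ∀ k, 0 ≤ c k)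
    (hΔt : ∀ k, 0 ≤ Δt k) (n : ℕ) : 0 ≤ energy a b c Δt n :=
  add_nonneg (add_nonneg (ha n) (sum_nonneg fun k _ => mul_nonneg (hb k) (hΔt k)))
    (mul_nonneg (hc n) (hΔt n))

theorem energy_zero : energy a b c Δt 0 = a 0 + (b 0 + c 0) * Δt 0 := by
  simp only [energy, zero_add, range_one, sum_singleton]
  ring

theorem le_energy (hc : ∀ k, 0 ≤ c k) (hΔt : ∀ k, 0 ≤ Δt k) (n : ℕ) :
    a n + ∑ k ∈ range (n + 1), b k * Δt k ≤ energy a b c Δt n :=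
  le_add_of_nonneg_right (mul_nonneg (hc n) (hΔt n))

theorem energy_succ_le {d : ℕ → ℝ} {g : ℝ} (hb : ∀ k, 0 ≤ b k) (hc : ∀ k, 0 ≤ c k)
    (hd : ∀ k, 0 ≤ d k) (hΔt : ∀ k, 0 ≤ Δt k) {k : ℕ}
    (hrec : a (k+1) - a k + b (k+1) * Δt (k+1) + c (k+1) * Δt (k+1) - c k * Δt k
      ≤ a k * d k * Δt k + g) :
    energy a b c Δt (k + 1) ≤ (1 + d k * Δt k) * energy a b c Δt k + g := by
  have hS : 0 ≤ ∑ j ∈ range (k + 1), b j * Δt j :=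
    sum_nonneg fun j _ => mul_nonneg (hb j) (hΔt j)
  have hdΔt : 0 ≤ d k * Δt k := mul_nonneg (hd k) (hΔt k)
  have hcΔt : 0 ≤ c k * Δt k := mul_nonneg (hc k) (hΔt k)
  simp only [energy, sum_range_succ _ (k + 1)]
  nlinarith [mul_nonneg hdΔt hS, mul_nonneg hdΔt hcΔt]

end Energy

theorem sum_range_succ_shift_eq_sum_Icc {M : Type*} [AddCommMonoid M] (f : ℕ → M) (n : ℕ) :
    ∑ k ∈ range n, f (k + 1) = ∑ k ∈ Icc 1 n, f k := by
  rw [range_eq_Ico, sum_Ico_add', zero_add, Ico_add_one_right_eq_Icc]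

/-- Discrete Gronwall lemma. -/
theorem discrete_gronwall (a b c d γ Δt : ℕ → ℝ) (m : ℕ)
    (ha : ∀ k, 0 ≤ a k) (hb : ∀ k, 0 ≤ b k) (hc : ∀ k, 0 ≤ c k)
    (hd : ∀ k, 0 ≤ d k) (hγ : ∀ k, 0 ≤ γ k) (hΔt : ∀ k, 0 ≤ Δt k)
    (hrec : ∀ k ≤ m,
      a (k+1) - a k + b (k+1) * Δt (k+1) + c (k+1) * Δt (k+1) - c k * Δt k
        ≤ a k * d k * Δt k + γ (k+1) * Δt (k+1)) :
    a (m+1) + ∑ k ∈ Finset.range (m+2), b k * Δt k ≤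
      Real.exp (∑ k ∈ Finset.range (m+1), d k * Δt k) *
        (a 0 + (b 0 + c 0) * Δt 0 + ∑ k ∈ Finset.Icc 1 (m+1), γ k * Δt k) := by
  have hE := energy_nonneg ha hb hc hΔt
  have hgronwall := discrete_gronwall_range (u := energy a b c Δt) (N := m + 1)
    (b := fun k => γ (k + 1) * Δt (k + 1)) (hE 0) (hE (m + 1))
    (fun k hk => energy_succ_le hb hc hd hΔt (hrec k (Nat.lt_succ_iff.mp hk)))
    (fun k => mul_nonneg (hd k) (hΔt k)) (fun k => mul_nonneg (hγ (k + 1)) (hΔt (k + 1)))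
  rw [energy_zero, sum_range_succ_shift_eq_sum_Icc (fun k => γ k * Δt k), mul_comm] at hgronwall
  exact (le_energy hc hΔt (m + 1)).trans hgronwall

end Paper
end

section
/- Suppose R^n > 0, E(m̃^{n+1}) + K_0 > 0, γ > 0, Δt > 0, and R^{n+1}, ξ^{n+1} satisfy (R^{n+1} − R^n)/Δt = −γ ξ^{n+1} ‖B^n‖^2 with ξ^{n+1} = R^{n+1} / (E(m̃^{n+1}) + K_0), where ‖B^n‖^2 ≥ 0. Then R^{n+1} = R^n / (1 + Δt γ ‖B^n‖^2 / (E(m̃^{n+1}) + K_0)), and hence 0 < R^{n+1} ≤ R^n with strict inequality R^{n+1} < R^n whenever ‖B^n‖ ≠ 0; moreover ξ^{n+1} > 0. -/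
/-! The update is linear-implicit in `R^{n+1}`: substituting `ξ^{n+1} = R^{n+1} / (E + K₀)` gives
`R^{n+1} (1 + Δt γ ‖B‖² / (E + K₀)) = R^n`, and dividing `R^n > 0` by a factor `≥ 1`
(`> 1` when `‖B‖ ≠ 0`) keeps it positive and does not increase it. -/

theorem mul_one_add_eq_of_implicit_step {x r dt γ D B : ℝ} (hdt : dt ≠ 0)
    (h : (x - r) / dt = -γ * (x / D) * B) : x * (1 + dt * γ * B / D) = r := by
  rw [div_eq_iff hdt] at h
  linear_combination h

/-- One step of the GSAV update: explicit formula for R^{n+1}, positivity and decrease. -/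
theorem gsav_step (Rn Rn1 ξ K0 Em γ Δt B2 : ℝ)
    (hRn : 0 < Rn) (hK0 : 0 < K0) (hEm : 0 ≤ Em) (hγ : 0 < γ) (hΔt : 0 < Δt)
    (hB2 : 0 ≤ B2)
    (hupd : (Rn1 - Rn) / Δt = -γ * ξ * B2)
    (hξ : ξ = Rn1 / (Em + K0)) :
    Rn1 = Rn / (1 + Δt * γ * B2 / (Em + K0)) ∧
      0 < Rn1 ∧ Rn1 ≤ Rn ∧ (B2 ≠ 0 → Rn1 < Rn) ∧ 0 < ξ := by
  have hE : 0 < Em + K0 := by linarith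
  have hmul := mul_one_add_eq_of_implicit_step hΔt.ne' (hξ ▸ hupd)
  have hform : Rn1 = Rn / (1 + Δt * γ * B2 / (Em + K0)) :=
    eq_div_of_mul_eq (by positivity) hmul
  have hpos : 0 < Rn1 := by rw [hform]; positivity
  refine ⟨hform, hpos, ?_, fun hB => ?_, by rw [hξ]; positivity⟩
  · rw [hform]
    exact div_le_self hRn.le (le_add_of_nonneg_right (by positivity))
  · have hB' : 0 < B2 := hB2.lt_of_ne' hB
    rw [hform]
    exact div_lt_self hRn (lt_add_of_pos_right 1 (by positivity))
end
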